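/- For a constant-action X-program with matrix P and action θ, and any s ∈ F_2^n, the bias P(X·sᵀ = 0) equals the expectation E_{c ~ C_s}[cos²(θ(n_s − 2·wt(c)))], where C_s is the binary linear code spanned by the columns of the submatrix P_s of P consisting of rows p with p·sᵀ = 1, n_s is the number of such rows, wt is the Hamming weight, and c ranges uniformly over C_s. -/

import Mathlib

/-- Hamming weight of a binary vector: number of coordinates equal to 1. -/
def wt {ι : Type*} [Fintype ι] (a : ι → ZMod 2) : ℕ :=
  (Finset.univ.filter fun i => a i = 1).card

/-- Output distribution of the constant-action X-program given by the k-by-n binary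
matrix `P` with action `θ`: `P(X = x)`. -/
noncomputable def XProb {k n : ℕ} (P : Matrix (Fin k) (Fin n) (ZMod 2)) (θ : ℝ)
    (x : Fin n → ZMod 2) : ℝ :=
  ‖∑ a ∈ Finset.univ.filter (fun a : Fin k → ZMod 2 => Matrix.vecMul a P = x),
    (Real.cos θ : ℂ) ^ (k - wt a) * (Complex.I * Real.sin θ) ^ (wt a)‖ ^ 2

/-- The bias of the X-program output distribution in direction `s`:
`P(X ⬝ sᵀ = 0)`, the probability that the output is orthogonal to `s` over `F₂`. -/
noncomputable def bias {k n : ℕ} (P : Matrix (Fin k) (Fin n) (ZMod 2)) (θ : ℝ)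
    (s : Fin n → ZMod 2) : ℝ :=
  ∑ x ∈ Finset.univ.filter (fun x : Fin n → ZMod 2 => dotProduct x s = 0), XProb P θ x

/-- The code `C_s`: the column span of the submatrix `P_s` of `P` consisting of the rows
not orthogonal to `s`, realized as the image of `d ↦ P_s ⬝ dᵀ`. -/
def Cs {k n : ℕ} (P : Matrix (Fin k) (Fin n) (ZMod 2)) (s : Fin n → ZMod 2) :
    Finset ({i : Fin k // dotProduct (P i) s = 1} → ZMod 2) :=
  Finset.image (fun d : Fin n → ZMod 2 => fun i => dotProduct (P i.1) d) Finset.univ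

/-!
The output amplitude is `F x = ∑_{a ⬝ P = x} W a` with `W a = ∏ⱼ (cos θ or i sin θ)`. Its
Walsh–Hadamard transform factorises over the rows `pⱼ` of `P`:
`F̂ d = ∏ⱼ (cos θ + i sin θ (-1)^{pⱼ⬝d}) = exp (i θ φ d)` with `φ d = ∑ⱼ (-1)^{pⱼ⬝d}`, a pure phase.
Writing `[x⬝s = 0] = (1 + (-1)^{x⬝s}) / 2` and applying Parseval, the bias is the average over `d`
of `(1 + cos (θ (φ (d + s) - φ d))) / 2`. Exactly the rows with `pⱼ⬝s = 1` flip sign, so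
`φ (d + s) - φ d = -2 (n_s - 2 wt (P_s d))` and the integrand is `cos² (θ (n_s - 2 wt (P_s d)))`.
Since `d ↦ P_s d` is linear, all its fibres over `C_s` have the same size, so averaging over `d`
is averaging over `C_s`.
-/

open Finset
open scoped BigOperators

lemma AddChar.map_sum_eq_prod {A M ι : Type*} [AddCommMonoid A] [CommMonoid M] (ψ : AddChar A M)
    (s : Finset ι) (f : ι → A) : ψ (∑ i ∈ s, f i) = ∏ i ∈ s, ψ (f i) := by
  classical
  induction s using Finset.induction_on with
  | empty => simp
  | insert i s hi ih => rw [sum_insert hi, prod_insert hi, map_add_eq_mul, ih]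

lemma ZMod.eq_zero_or_eq_one : ∀ t : ZMod 2, t = 0 ∨ t = 1 := by decide

noncomputable def signChar : AddChar (ZMod 2) ℝ :=
  AddChar.zmodChar 2 (by norm_num : (-1 : ℝ) ^ 2 = 1)

@[simp] lemma signChar_one : signChar 1 = -1 := by
  simp [signChar, AddChar.zmodChar_apply, show (1 : ZMod 2).val = 1 from rfl]

lemma signChar_eq_one_sub (t : ZMod 2) : signChar t = 1 - 2 * if t = 1 then 1 else 0 := by
  rcases ZMod.eq_zero_or_eq_one t with rfl | rfl <;> norm_num

lemma sum_zmod_two {M : Type*} [AddCommMonoid M] (f : ZMod 2 → M) : ∑ t, f t = f 0 + f 1 :=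
  Fin.sum_univ_two f

lemma sum_signChar_eq {ι : Type*} [Fintype ι] (c : ι → ZMod 2) :
    ∑ i, signChar (c i) = Fintype.card ι - 2 * wt c := by
  simp only [signChar_eq_one_sub, sum_sub_distrib, ← mul_sum, sum_boole]
  simp [wt]

lemma sum_signChar_dotProduct {ι : Type*} [Fintype ι] [DecidableEq ι] (y : ι → ZMod 2) :
    ∑ d, signChar (y ⬝ᵥ d) = if y = 0 then 2 ^ Fintype.card ι else 0 := by
  have hfactor (t : ZMod 2) : ∑ u, signChar (t * u) = if t = 0 then 2 else 0 := by
    rcases ZMod.eq_zero_or_eq_one t with rfl | rfl <;> norm_num [sum_zmod_two]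
  simp only [dotProduct, AddChar.map_sum_eq_prod]
  rw [← Fintype.prod_sum (fun i u => signChar (y i * u))]
  simp only [hfactor, Fintype.prod_ite_zero, prod_const, card_univ, funext_iff, Pi.zero_apply]

section Walsh

variable {ι : Type*} [Fintype ι] [DecidableEq ι]

noncomputable def walshTransform (f : (ι → ZMod 2) → ℂ) (d : ι → ZMod 2) : ℂ :=
  ∑ x, f x * signChar (x ⬝ᵥ d)

open ComplexConjugate in
lemma sum_signChar_mul_conj_eq (f g : (ι → ZMod 2) → ℂ) (s : ι → ZMod 2) :
    ∑ x, signChar (x ⬝ᵥ s) * (f x * conj (g x)) =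
      𝔼 d, walshTransform f (d + s) * conj (walshTransform g d) := by
  have hchar (x y d : ι → ZMod 2) : signChar (x ⬝ᵥ (d + s)) * signChar (y ⬝ᵥ d) =
      signChar (x ⬝ᵥ s) * signChar ((x - y) ⬝ᵥ d) := by
    rw [← AddChar.map_add_eq_mul, ← AddChar.map_add_eq_mul, dotProduct_add, sub_dotProduct,
      CharTwo.sub_eq_add]
    ring_nf
  have horth (x y : ι → ZMod 2) :
      ∑ d, (signChar ((x - y) ⬝ᵥ d) : ℂ) = if x = y then 2 ^ Fintype.card ι else 0 := by
    rw [← Complex.ofReal_sum, sum_signChar_dotProduct]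
    split_ifs <;> simp_all [sub_eq_zero]
  have hexpand : ∑ d, walshTransform f (d + s) * conj (walshTransform g d) =
      ∑ x, ∑ y, f x * conj (g y) * signChar (x ⬝ᵥ s) * ∑ d, (signChar ((x - y) ⬝ᵥ d) : ℂ) := by
    simp only [walshTransform, map_sum, map_mul, Complex.conj_ofReal, sum_mul, mul_sum]
    conv_lhs => enter [2, d]; rw [sum_comm]
    conv_lhs => rw [sum_comm]
    refine sum_congr rfl fun x _ => ?_
    conv_lhs => rw [sum_comm]
    refine sum_congr rfl fun y _ => sum_congr rfl fun d _ => ?_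
    rw [mul_mul_mul_comm, ← Complex.ofReal_mul, hchar]
    push_cast
    ring
  simp only [Fintype.expect_eq_sum_div_card, hexpand, horth, mul_ite, mul_zero, sum_ite_eq,
    mem_univ, if_true, sum_div]
  refine sum_congr rfl fun x _ => ?_
  simp only [Fintype.card_fun, ZMod.card]
  push_cast
  field_simp

end Walsh

lemma prod_ite_eq_pow_wt {ι M : Type*} [Fintype ι] [CommMonoid M] (a : ι → ZMod 2) (x y : M) :
    ∏ i, (if a i = 1 then x else y) = x ^ wt a * y ^ (Fintype.card ι - wt a) := by
  rw [prod_ite, prod_const, prod_const, wt, ← card_univ,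
    ← card_filter_add_card_filter_not (s := univ) (fun i => a i = 1), Nat.add_sub_cancel_left]

lemma cos_add_I_sin_mul_signChar (θ : ℝ) (u : ZMod 2) :
    (Real.cos θ : ℂ) + Complex.I * Real.sin θ * signChar u =
      Complex.exp ((θ * signChar u : ℝ) * Complex.I) := by
  rcases ZMod.eq_zero_or_eq_one u with rfl | rfl <;>
    simp only [AddChar.map_zero_eq_one, signChar_one, Complex.exp_mul_I] <;> push_cast <;>
    simp only [mul_one, mul_neg_one, Complex.cos_neg, Complex.sin_neg] <;> ring

lemma one_add_signChar_div_two (t : ZMod 2) : (1 + signChar t) / 2 = if t = 0 then 1 else 0 := by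
  rcases ZMod.eq_zero_or_eq_one t with rfl | rfl <;> norm_num

lemma sum_signChar_add {ι : Type*} [Fintype ι] (u v : ι → ZMod 2) :
    ∑ j, signChar (u j + v j) =
      ∑ j, signChar (u j) - 2 * ∑ j : {j // v j = 1}, signChar (u j) := by
  classical
  have hsub : ∑ j : {j // v j = 1}, signChar (u j) =
      ∑ j, if v j = 1 then signChar (u j) else 0 := by
    rw [← sum_filter]
    exact (sum_subtype {j | v j = 1} (fun j => by simp) (fun j => signChar (u j))).symm
  rw [hsub, mul_sum, ← sum_sub_distrib]
  refine sum_congr rfl fun j _ => ?_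
  rw [AddChar.map_add_eq_mul, signChar_eq_one_sub (v j)]
  split_ifs <;> ring

section XProgram

open Matrix ComplexConjugate

variable {k n : ℕ} (P : Matrix (Fin k) (Fin n) (ZMod 2)) (θ : ℝ)

noncomputable def xAmplitude (x : Fin n → ZMod 2) : ℂ :=
  ∑ a ∈ univ.filter (fun a : Fin k → ZMod 2 => a ᵥ* P = x),
    (Real.cos θ : ℂ) ^ (k - wt a) * (Complex.I * Real.sin θ) ^ (wt a)

lemma walshTransform_xAmplitude (d : Fin n → ZMod 2) :
    walshTransform (xAmplitude P θ) d =
      Complex.exp ((θ * ∑ j, signChar ((P *ᵥ d) j) : ℝ) * Complex.I) := by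
  have hfiber : walshTransform (xAmplitude P θ) d = ∑ a : Fin k → ZMod 2,
      (Real.cos θ : ℂ) ^ (k - wt a) * (Complex.I * Real.sin θ) ^ (wt a) *
        signChar ((a ᵥ* P) ⬝ᵥ d) := by
    rw [walshTransform, ← sum_fiberwise univ (fun a => a ᵥ* P)]
    refine sum_congr rfl fun x _ => ?_
    rw [xAmplitude, sum_mul]
    exact sum_congr rfl fun a ha => by rw [(mem_filter.1 ha).2]
  have hterm (a : Fin k → ZMod 2) :
      (Real.cos θ : ℂ) ^ (k - wt a) * (Complex.I * Real.sin θ) ^ (wt a) *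
        signChar ((a ᵥ* P) ⬝ᵥ d) =
      ∏ j, (if a j = 1 then Complex.I * Real.sin θ else (Real.cos θ : ℂ)) *
        signChar (a j * (P *ᵥ d) j) := by
    rw [← dotProduct_mulVec, dotProduct, AddChar.map_sum_eq_prod, Complex.ofReal_prod,
      prod_mul_distrib, prod_ite_eq_pow_wt, Fintype.card_fin, mul_comm ((Real.cos θ : ℂ) ^ _)]
  have hfactor (w : ZMod 2) :
      ∑ t : ZMod 2, (if t = 1 then Complex.I * Real.sin θ else (Real.cos θ : ℂ)) *
        signChar (t * w) = Complex.exp ((θ * signChar w : ℝ) * Complex.I) := by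
    rw [sum_zmod_two, ← cos_add_I_sin_mul_signChar]
    simp
  rw [hfiber, sum_congr rfl fun a _ => hterm a, ← Fintype.prod_sum (fun j t =>
    (if t = 1 then Complex.I * Real.sin θ else (Real.cos θ : ℂ)) * signChar (t * (P *ᵥ d) j))]
  simp only [hfactor, ← Complex.exp_sum, ← sum_mul, Complex.ofReal_sum, mul_sum]

lemma sum_signChar_mul_norm_sq_xAmplitude (s : Fin n → ZMod 2) :
    ∑ x, signChar (x ⬝ᵥ s) * ‖xAmplitude P θ x‖ ^ 2 =
      𝔼 d, Real.cos (θ * (∑ j, signChar ((P *ᵥ (d + s)) j) - ∑ j, signChar ((P *ᵥ d) j))) := by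
  have hphase (a b : ℝ) : Complex.exp (a * Complex.I) * conj (Complex.exp (b * Complex.I)) =
      Complex.exp ((a - b : ℝ) * Complex.I) := by
    rw [← Complex.exp_conj, ← Complex.exp_add, map_mul, Complex.conj_ofReal, Complex.conj_I]
    push_cast
    ring_nf
  have h := congrArg Complex.re (sum_signChar_mul_conj_eq (xAmplitude P θ) (xAmplitude P θ) s)
  simp only [walshTransform_xAmplitude, hphase, Complex.re_expect, Complex.exp_ofReal_mul_I_re,
    Complex.mul_conj, Complex.re_sum, Complex.re_ofReal_mul, Complex.ofReal_re,
    Complex.normSq_eq_norm_sq] at h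
  simpa only [mul_sub] using h

lemma bias_eq_expect_cos_sq (s : Fin n → ZMod 2) :
    bias P θ s = 𝔼 d, Real.cos (θ * ∑ i : {i // P i ⬝ᵥ s = 1}, signChar (P i ⬝ᵥ d)) ^ 2 := by
  have hphase (d : Fin n → ZMod 2) :
      ∑ j, signChar ((P *ᵥ (d + s)) j) - ∑ j, signChar ((P *ᵥ d) j) =
        -2 * ∑ i : {i // P i ⬝ᵥ s = 1}, signChar (P i ⬝ᵥ d) := by
    rw [mulVec_add, Pi.add_def, sum_signChar_add, sub_sub_cancel_left, neg_mul]
    rfl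
  have hnorm := sum_signChar_mul_norm_sq_xAmplitude P θ 0
  simp only [add_zero] at hnorm
  calc bias P θ s
      = (∑ x, signChar (x ⬝ᵥ 0) * ‖xAmplitude P θ x‖ ^ 2 +
          ∑ x, signChar (x ⬝ᵥ s) * ‖xAmplitude P θ x‖ ^ 2) / 2 := by
        rw [bias, sum_filter, ← sum_add_distrib, sum_div]
        refine sum_congr rfl fun x _ => ?_
        rw [dotProduct_zero, AddChar.map_zero_eq_one, ← add_mul, mul_div_right_comm,
          one_add_signChar_div_two, ite_mul, one_mul, zero_mul]
        rfl
    _ = 𝔼 d, (1 + Real.cos (θ * (∑ j, signChar ((P *ᵥ (d + s)) j) -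
          ∑ j, signChar ((P *ᵥ d) j)))) / 2 := by
        rw [hnorm, sum_signChar_mul_norm_sq_xAmplitude, ← expect_add_distrib, expect_div]
        simp
    _ = _ := by
        refine expect_congr rfl fun d _ => ?_
        rw [hphase, Real.cos_sq, mul_left_comm, neg_mul, Real.cos_neg]
        ring

end XProgram

lemma AddMonoidHom.expect_comp_eq_expect_image {G H K : Type*} [AddGroup G] [Fintype G]
    [AddMonoid H] [DecidableEq H] [Semifield K] [CharZero K] (f : G →+ H) (h : H → K) :
    𝔼 x, h (f x) = 𝔼 c ∈ univ.image f, h c := by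
  have hfiber (c : H) (hc : c ∈ univ.image f) : #{x | f x = c} = #{x | f x = 0} := by
    obtain ⟨x, -, rfl⟩ := mem_image.1 hc
    exact AddMonoidHom.card_fiber_eq_of_mem_range f ⟨x, rfl⟩ ⟨0, map_zero f⟩
  have hsum : ∑ x, h (f x) = #{x | f x = 0} • ∑ c ∈ univ.image f, h c := by
    rw [sum_comp, smul_sum]
    exact sum_congr rfl fun c hc => by rw [hfiber c hc]
  have hcard : Fintype.card G = #(univ.image f) * #{x | f x = 0} := by
    rw [← card_univ, card_eq_sum_card_image f univ, sum_congr rfl hfiber, sum_const, smul_eq_mul]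
  have hker : (#{x | f x = 0} : K) ≠ 0 :=
    Nat.cast_ne_zero.2 (card_ne_zero_of_mem (mem_filter.2 ⟨mem_univ 0, map_zero f⟩))
  rw [Fintype.expect_eq_sum_div_card, expect_eq_sum_div_card, hsum, hcard, nsmul_eq_mul]
  push_cast
  field_simp

theorem bias_eq_expectation_over_code {k n : ℕ} (P : Matrix (Fin k) (Fin n) (ZMod 2))
    (θ : ℝ) (s : Fin n → ZMod 2) :
    bias P θ s =
      (1 / ((Cs P s).card : ℝ)) * ∑ c ∈ Cs P s,
        (Real.cos (θ * ((Fintype.card {i : Fin k // dotProduct (P i) s = 1} : ℝ)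
          - 2 * (wt c : ℝ)))) ^ 2 := by
  let code : (Fin n → ZMod 2) →+ ({i : Fin k // P i ⬝ᵥ s = 1} → ZMod 2) :=
    AddMonoidHom.mk' (fun d i => P i ⬝ᵥ d) fun a b => funext fun i => dotProduct_add _ _ _
  have hCs : Cs P s = univ.image code := rfl
  rw [bias_eq_expect_cos_sq, one_div_mul_eq_div, ← expect_eq_sum_div_card, hCs,
    ← code.expect_comp_eq_expect_image]
  simp only [sum_signChar_eq]
  rfl
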